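/- Let Ω be an unbounded domain in a complex Banach space such that liminf_{z→∞, w→b} l_Ω(z, w) > 0 for all b ∈ Ω. Then Ω is hyperbolic, i.e., the Kobayashi pseudo-distance k_Ω is a distance defining the topology of Ω. -/

import Mathlib

/-!
Fix `b ∈ Ω` and take `c ∈ (0, 1]`, `R > ‖b‖` with `c ≤ l_Ω(z, w)` for `‖z‖ ≥ R` and `w` near `b`.
A holomorphic disc `f` with `f 0 = w` maps `|τ| < c` into the ball of radius `R`, since the disc
recentred at `τ` gives `l_Ω(f τ, w) ≤ |τ|`; Schwarz's lemma on that smaller disc then gives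
`‖f l - w‖ ≤ (2R / c) |l|`. Hence each link of a Kobayashi chain starting near `b` has Poincaré
length at least a fixed multiple of the distance it travels, and telescoping gives
`min A (κ ‖w - b‖) ≤ k_Ω(b, w)`: `k_Ω` separates points and its small balls are small in norm.
Conversely, straight discs in a norm ball give `k_Ω(z, w) = O(‖w - z‖)`.
The lower bound needs every two points of `Ω` to lie on one holomorphic disc, as otherwise
`l_Ω = sInf ∅ = 0`: compose a Bernstein polynomial approximating a path in `Ω` with a map from the
unit disc onto a thin neighbourhood of `[0, 1]`.
-/

open Filter Metric Set Topology MeasureTheory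

/-- The Lempert function of a domain `Ω` in a complex Banach space. -/
noncomputable def lempert {E : Type*} [NormedAddCommGroup E] [NormedSpace ℂ E]
    (Ω : Set E) (z w : E) : ℝ :=
  sInf {r : ℝ | ∃ (f : ℂ → E) (l : ℂ), DifferentiableOn ℂ f (ball 0 1) ∧
    MapsTo f (ball 0 1) Ω ∧ f 0 = z ∧ f l = w ∧ l ∈ ball (0:ℂ) 1 ∧ r = ‖l‖}

/-- The Poincaré distance from `0` to a point at "radius" `r`. -/
noncomputable def poincareDist (r : ℝ) : ℝ := (1/2) * Real.log ((1+r)/(1-r))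

/-- The Kobayashi pseudo-distance of a domain `Ω`, defined via chains. -/
noncomputable def kobayashi {E : Type*} [NormedAddCommGroup E] [NormedSpace ℂ E]
    (Ω : Set E) (z w : E) : ℝ :=
  sInf {r : ℝ | ∃ (n : ℕ) (c : ℕ → E), c 0 = z ∧ c n = w ∧ (∀ i, i ≤ n → c i ∈ Ω) ∧
    r = ∑ i ∈ Finset.range n, poincareDist (lempert Ω (c i) (c (i+1)))}

/-- `Ω` is (Kobayashi) hyperbolic: `kobayashi Ω` is a distance defining the norm topology. -/
def IsHyperbolic {E : Type*} [NormedAddCommGroup E] [NormedSpace ℂ E] (Ω : Set E) : Prop :=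
  (∀ z ∈ Ω, ∀ w ∈ Ω, kobayashi Ω z w = 0 → z = w) ∧
  (∀ z ∈ Ω, ∀ ε > 0, ∃ δ > 0, ∀ w ∈ Ω, kobayashi Ω z w < δ → ‖w - z‖ < ε) ∧
  (∀ z ∈ Ω, ∀ ε > 0, ∃ δ > 0, ∀ w ∈ Ω, ‖w - z‖ < δ → kobayashi Ω z w < ε)

/-- A sequence in `Ω` which is Cauchy for the Kobayashi pseudo-distance. -/
def KCauchy {E : Type*} [NormedAddCommGroup E] [NormedSpace ℂ E]
    (Ω : Set E) (x : ℕ → E) : Prop :=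
  ∀ ε > 0, ∃ N, ∀ m ≥ N, ∀ n ≥ N, kobayashi Ω (x m) (x n) < ε

/-- `Ω` is complete hyperbolic. -/
def IsCompleteHyperbolic {E : Type*} [NormedAddCommGroup E] [NormedSpace ℂ E]
    (Ω : Set E) : Prop :=
  IsHyperbolic Ω ∧ ∀ x : ℕ → E, (∀ n, x n ∈ Ω) → KCauchy Ω x →
    ∃ p ∈ Ω, Tendsto x atTop (nhds p)

/-- The filter of neighborhoods of `∞` (traces on `Ω` taken by `⊓ 𝓟 Ω` where needed). -/
noncomputable def atInfFilter (E : Type*) [NormedAddCommGroup E] : Filter E :=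
  Filter.comap (fun z : E => ‖z‖) Filter.atTop

/-- The boundary point described by the filter `l` (either `𝓝 a` for `a ∈ ∂Ω`, or the
filter at `∞`) is a `k'`-point of `Ω`: no `k_Ω`-Cauchy sequence of `Ω` converges to it. -/
def KPrimeAt {E : Type*} [NormedAddCommGroup E] [NormedSpace ℂ E]
    (Ω : Set E) (l : Filter E) : Prop :=
  ¬ ∃ x : ℕ → E, (∀ n, x n ∈ Ω) ∧ KCauchy Ω x ∧ Tendsto x atTop l

/-- A real-valued function is subharmonic on `U ⊆ ℂ`: upper semicontinuous and
satisfying the sub-mean-value inequality on closed disks contained in `U`. -/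
def SubharmonicOnR (v : ℂ → ℝ) (U : Set ℂ) : Prop :=
  UpperSemicontinuousOn v U ∧ ∀ c : ℂ, ∀ r : ℝ, 0 < r → closedBall c r ⊆ U →
    v c ≤ (2 * Real.pi)⁻¹ *
      ∫ θ in (0:ℝ)..(2*Real.pi), v (c + (r : ℂ) * Complex.exp (θ * Complex.I))

/-- Plurisubharmonicity on a domain of a complex Banach space. -/
def PlurisubharmonicOn {E : Type*} [NormedAddCommGroup E] [NormedSpace ℂ E]
    (u : E → ℝ) (Ω : Set E) : Prop :=
  UpperSemicontinuousOn u Ω ∧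
    ∀ a b : E, SubharmonicOnR (fun t => u (a + t • b)) {t : ℂ | a + t • b ∈ Ω}

open scoped ComplexConjugate

theorem one_sub_ne_zero_of_norm_lt_one {R : Type*} [SeminormedRing R] [NormOneClass R] {s : R}
    (hs : ‖s‖ < 1) : 1 - s ≠ 0 :=
  sub_ne_zero.2 fun h => by simp [← h] at hs

section DiscSwap

noncomputable def discSwap (a s : ℂ) : ℂ := (a - s) / (1 - conj a * s)

@[simp] theorem discSwap_zero (a : ℂ) : discSwap a 0 = a := by simp [discSwap]

@[simp] theorem discSwap_self (a : ℂ) : discSwap a a = 0 := by simp [discSwap]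

variable {a s : ℂ}

theorem one_sub_conj_mul_ne_zero (ha : ‖a‖ < 1) (hs : ‖s‖ < 1) : 1 - conj a * s ≠ 0 :=
  one_sub_ne_zero_of_norm_lt_one <| by
    rw [norm_mul, RCLike.norm_conj]
    nlinarith [norm_nonneg a, norm_nonneg s]

theorem norm_discSwap_lt_one (ha : ‖a‖ < 1) (hs : ‖s‖ < 1) : ‖discSwap a s‖ < 1 := by
  have hne := one_sub_conj_mul_ne_zero ha hs
  rw [discSwap, norm_div, div_lt_one (norm_pos_iff.mpr hne)]
  have key : ‖1 - conj a * s‖ ^ 2 - ‖a - s‖ ^ 2 = (1 - ‖a‖ ^ 2) * (1 - ‖s‖ ^ 2) := by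
    simp only [← Complex.normSq_eq_norm_sq, Complex.normSq_apply, Complex.sub_re,
      Complex.sub_im, Complex.mul_re, Complex.mul_im, Complex.conj_re, Complex.conj_im,
      Complex.one_re, Complex.one_im]
    ring
  have : 0 < (1 - ‖a‖ ^ 2) * (1 - ‖s‖ ^ 2) := by
    apply mul_pos <;> nlinarith [norm_nonneg a, norm_nonneg s]
  exact lt_of_pow_lt_pow_left₀ 2 (norm_nonneg _) (by linarith)

theorem mapsTo_discSwap (ha : a ∈ ball (0 : ℂ) 1) :
    MapsTo (discSwap a) (ball 0 1) (ball 0 1) := fun _ hs =>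
  mem_ball_zero_iff.mpr <|
    norm_discSwap_lt_one (mem_ball_zero_iff.mp ha) (mem_ball_zero_iff.mp hs)

theorem differentiableOn_discSwap (ha : a ∈ ball (0 : ℂ) 1) :
    DifferentiableOn ℂ (discSwap a) (ball 0 1) := fun _ hs =>
  ((differentiableAt_const a).sub differentiableAt_id).div
    ((differentiableAt_const _).sub ((differentiableAt_const _).mul differentiableAt_id))
    (one_sub_conj_mul_ne_zero (mem_ball_zero_iff.mp ha) (mem_ball_zero_iff.mp hs))
    |>.differentiableWithinAt

end DiscSwap

section Lempert

variable {E : Type*} [NormedAddCommGroup E] [NormedSpace ℂ E]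

def JoinedByDisc (Ω : Set E) (z w : E) : Prop :=
  ∃ (f : ℂ → E) (l : ℂ), DifferentiableOn ℂ f (ball 0 1) ∧ MapsTo f (ball 0 1) Ω ∧
    f 0 = z ∧ f l = w ∧ l ∈ ball (0 : ℂ) 1

theorem lempert_nonneg (Ω : Set E) (z w : E) : 0 ≤ lempert Ω z w :=
  Real.sInf_nonneg <| by rintro _ ⟨f, l, -, -, -, -, -, rfl⟩; exact norm_nonneg l

theorem lempert_le_norm {Ω : Set E} {f : ℂ → E} {l : ℂ}
    (hd : DifferentiableOn ℂ f (ball 0 1)) (hm : MapsTo f (ball 0 1) Ω)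
    (hl : l ∈ ball (0 : ℂ) 1) : lempert Ω (f 0) (f l) ≤ ‖l‖ :=
  csInf_le ⟨0, by rintro _ ⟨f, l, -, -, -, -, -, rfl⟩; exact norm_nonneg l⟩
    ⟨f, l, hd, hm, rfl, rfl, hl, rfl⟩

theorem le_lempert {Ω : Set E} {z w : E} {a : ℝ} (hzw : JoinedByDisc Ω z w)
    (h : ∀ (f : ℂ → E) (l : ℂ), DifferentiableOn ℂ f (ball 0 1) → MapsTo f (ball 0 1) Ω →
      f 0 = z → f l = w → l ∈ ball (0 : ℂ) 1 → a ≤ ‖l‖) :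
    a ≤ lempert Ω z w := by
  obtain ⟨f, l, hd, hm, h0, hl, hlb⟩ := hzw
  exact le_csInf ⟨_, f, l, hd, hm, h0, hl, hlb, rfl⟩
    (by rintro _ ⟨f, l, hd, hm, h0, hl, hlb, rfl⟩; exact h f l hd hm h0 hl hlb)

theorem lempert_lt_one (Ω : Set E) (z w : E) : lempert Ω z w < 1 := by
  by_cases h : JoinedByDisc Ω z w
  · obtain ⟨f, l, hd, hm, rfl, rfl, hl⟩ := h
    exact (lempert_le_norm hd hm hl).trans_lt (mem_ball_zero_iff.mp hl)
  · refine (Real.sInf_nonpos fun r hr => ?_).trans_lt one_pos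
    obtain ⟨f, l, hd, hm, h0, hl, hlb, -⟩ := hr
    exact absurd ⟨f, l, hd, hm, h0, hl, hlb⟩ h

theorem lempert_apply_apply_zero_le_norm {Ω : Set E} {f : ℂ → E} {l : ℂ}
    (hd : DifferentiableOn ℂ f (ball 0 1)) (hm : MapsTo f (ball 0 1) Ω)
    (hl : l ∈ ball (0 : ℂ) 1) : lempert Ω (f l) (f 0) ≤ ‖l‖ := by
  simpa using lempert_le_norm (hd.comp (differentiableOn_discSwap hl) (mapsTo_discSwap hl))
    (hm.comp (mapsTo_discSwap hl)) hl

theorem min_le_lempert_of_forall_far {Ω : Set E} {w z : E} {c R : ℝ} (hc : 0 < c)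
    (hc1 : c ≤ 1) (hw : ‖w‖ < R) (hfar : ∀ x ∈ Ω, R ≤ ‖x‖ → c ≤ lempert Ω x w)
    (hwz : JoinedByDisc Ω w z) :
    min c (c / (2 * R) * ‖z - w‖) ≤ lempert Ω w z := by
  refine le_lempert hwz fun f l hd hm h0 hl hlb => ?_
  subst h0 hl
  have hR : 0 < R := (norm_nonneg _).trans_lt hw
  have hsmall : ∀ τ ∈ ball (0 : ℂ) c, ‖f τ‖ < R := by
    intro τ hτ
    have hτ1 : τ ∈ ball (0 : ℂ) 1 := ball_subset_ball hc1 hτ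
    by_contra! hfτ
    exact (mem_ball_zero_iff.mp hτ).not_ge <|
      (hfar _ (hm hτ1) hfτ).trans (lempert_apply_apply_zero_le_norm hd hm hτ1)
  rcases lt_or_ge ‖l‖ c with hlc | hlc
  · have hmaps : MapsTo f (ball 0 c) (closedBall (f 0) (2 * R)) := fun τ hτ => by
      rw [mem_closedBall, dist_eq_norm]
      linarith [norm_sub_le (f τ) (f 0), hsmall τ hτ]
    have hS := Complex.dist_le_div_mul_dist_of_mapsTo_ball (hd.mono (ball_subset_ball hc1))
      hmaps (mem_ball_zero_iff.mpr hlc)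
    rw [dist_eq_norm, dist_zero_right] at hS
    refine min_le_of_right_le ?_
    calc c / (2 * R) * ‖f l - f 0‖ ≤ c / (2 * R) * (2 * R / c * ‖l‖) := by gcongr
      _ = ‖l‖ := by field_simp
  · exact min_le_of_left_le hlc

theorem lempert_le_of_ball {Ω : Set E} {z w : E} {ρ : ℝ} (hball : ball z ρ ⊆ Ω)
    (hw : ‖w - z‖ < ρ) : lempert Ω z w ≤ ‖w - z‖ / ρ := by
  have hρ : 0 < ρ := (norm_nonneg _).trans_lt hw
  rcases eq_or_ne w z with rfl | hwz
  · simpa using lempert_le_norm (Ω := Ω) (f := fun _ => w) (l := 0) (differentiableOn_const w)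
      (fun _ _ => hball (mem_ball_self hρ)) (mem_ball_self one_pos)
  have hwz' : 0 < ‖w - z‖ := norm_pos_iff.mpr (sub_ne_zero.mpr hwz)
  set v : E := (ρ / ‖w - z‖ : ℂ) • (w - z)
  have hv : ‖v‖ = ρ := by
    rw [norm_smul, norm_div, Complex.norm_real, Complex.norm_real, Real.norm_of_nonneg hρ.le,
      Real.norm_of_nonneg hwz'.le, div_mul_cancel₀ _ hwz'.ne']
  have hl : ((‖w - z‖ / ρ : ℝ) : ℂ) ∈ ball (0 : ℂ) 1 := by
    rwa [mem_ball_zero_iff, Complex.norm_real, Real.norm_of_nonneg (by positivity),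
      div_lt_one hρ]
  have hmaps : MapsTo (fun t : ℂ => z + t • v) (ball 0 1) Ω := fun t ht => hball <| by
    rw [mem_ball, dist_eq_norm, add_sub_cancel_left, norm_smul, hv]
    exact mul_lt_of_lt_one_left hρ (mem_ball_zero_iff.mp ht)
  have hend : z + ((‖w - z‖ / ρ : ℝ) : ℂ) • v = w := by
    rw [smul_smul, ← Complex.ofReal_div, ← Complex.ofReal_mul,
      div_mul_div_cancel₀ hρ.ne', div_self hwz'.ne', Complex.ofReal_one, one_smul,
      add_sub_cancel]
  have := lempert_le_norm (f := fun t : ℂ => z + t • v)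
    ((differentiableOn_const z).add (differentiableOn_id.smul_const v)) hmaps hl
  rwa [zero_smul, add_zero, hend, Complex.norm_real, Real.norm_of_nonneg (by positivity)] at this

end Lempert

section Poincare

theorem half_le_poincareDist {r : ℝ} (h0 : 0 ≤ r) (h1 : r < 1) : r / 2 ≤ poincareDist r := by
  have hlog := Real.one_sub_inv_le_log_of_pos (x := (1 + r) / (1 - r))
    (by apply div_pos <;> linarith)
  rw [inv_div, one_sub_div (by linarith)] at hlog
  have : r ≤ (1 + r - (1 - r)) / (1 + r) := by
    rw [le_div_iff₀ (by linarith)]; nlinarith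
  unfold poincareDist; linarith

theorem poincareDist_le_two_mul {r : ℝ} (h0 : 0 ≤ r) (h1 : r ≤ 1 / 2) :
    poincareDist r ≤ 2 * r := by
  have hlog := Real.log_le_sub_one_of_pos (x := (1 + r) / (1 - r))
    (by apply div_pos <;> linarith)
  rw [div_sub_one (by linarith)] at hlog
  have : (1 + r - (1 - r)) / (1 - r) ≤ 4 * r := by
    rw [div_le_iff₀ (by linarith)]; nlinarith
  unfold poincareDist; linarith

end Poincare

theorem exists_forall_of_eventually_atInf_prod_nhdsWithin {E : Type*} [NormedAddCommGroup E]
    {Ω : Set E} {b : E} {P : E → E → Prop}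
    (h : ∀ᶠ p : E × E in (atInfFilter E ⊓ 𝓟 Ω) ×ˢ 𝓝[Ω] b, P p.1 p.2) :
    ∃ R : ℝ, ∃ ρ > 0, ∀ z ∈ Ω, R ≤ ‖z‖ → ∀ w ∈ Ω, dist w b < ρ → P z w := by
  obtain ⟨pa, hpa, pb, hpb, himp⟩ := eventually_prod_iff.mp h
  rw [eventually_inf_principal, atInfFilter, eventually_comap, eventually_atTop] at hpa
  obtain ⟨R, hR⟩ := hpa
  obtain ⟨ρ, hρ, hρb⟩ := Metric.mem_nhdsWithin_iff.mp hpb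
  exact ⟨R, ρ, hρ, fun z hz hRz w hw hwb => himp (hR _ hRz z rfl hz) (hρb ⟨hwb, hw⟩)⟩

theorem min_le_min_add_min {A u v t : ℝ} (hA : 0 ≤ A) (hv : 0 ≤ v) (ht : 0 ≤ t)
    (h : u ≤ v + t) : min A u ≤ min A v + min A t := by
  simp only [min_def]; split_ifs <;> linarith

section Kobayashi

variable {E : Type*} [NormedAddCommGroup E] [NormedSpace ℂ E]

theorem half_lempert_le_poincareDist (Ω : Set E) (z w : E) :
    lempert Ω z w / 2 ≤ poincareDist (lempert Ω z w) :=
  half_le_poincareDist (lempert_nonneg Ω z w) (lempert_lt_one Ω z w)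

theorem poincareDist_lempert_nonneg (Ω : Set E) (z w : E) :
    0 ≤ poincareDist (lempert Ω z w) :=
  (div_nonneg (lempert_nonneg Ω z w) zero_le_two).trans (half_lempert_le_poincareDist Ω z w)

theorem kobayashi_le_poincareDist_lempert {Ω : Set E} {z w : E} (hz : z ∈ Ω) (hw : w ∈ Ω) :
    kobayashi Ω z w ≤ poincareDist (lempert Ω z w) :=
  csInf_le ⟨0, by
      rintro _ ⟨n, c, -, -, -, rfl⟩
      exact Finset.sum_nonneg fun i _ => poincareDist_lempert_nonneg Ω _ _⟩
    ⟨1, fun i => if i = 0 then z else w, rfl, rfl,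
      fun i _ => by dsimp only; split_ifs <;> assumption, by simp⟩

theorem sub_le_kobayashi {Ω : Set E} {F : E → ℝ}
    (hF : ∀ x ∈ Ω, ∀ y ∈ Ω, F y ≤ F x + poincareDist (lempert Ω x y))
    {z w : E} (hz : z ∈ Ω) (hw : w ∈ Ω) : F w - F z ≤ kobayashi Ω z w := by
  refine le_csInf ⟨_, 1, fun i => if i = 0 then z else w, rfl, rfl,
    fun i _ => by dsimp only; split_ifs <;> assumption, rfl⟩ ?_
  rintro _ ⟨n, c, rfl, rfl, hc, rfl⟩
  calc F (c n) - F (c 0) = ∑ i ∈ Finset.range n, (F (c (i + 1)) - F (c i)) :=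
        (Finset.sum_range_sub (fun i => F (c i)) n).symm
    _ ≤ _ := Finset.sum_le_sum fun i hi => by
        have hi := Finset.mem_range.mp hi
        linarith [hF _ (hc i hi.le) _ (hc (i + 1) hi)]

theorem kobayashi_le_of_ball {Ω : Set E} {z w : E} {ρ : ℝ} (hρ : 0 < ρ)
    (hball : ball z ρ ⊆ Ω) (hw : ‖w - z‖ ≤ ρ / 2) : kobayashi Ω z w ≤ 2 * ‖w - z‖ / ρ := by
  have hwρ : ‖w - z‖ < ρ := by linarith
  have hlem := lempert_le_of_ball hball hwρ
  have hhalf : ‖w - z‖ / ρ ≤ 1 / 2 := by rw [div_le_iff₀ hρ]; linarith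
  calc kobayashi Ω z w ≤ poincareDist (lempert Ω z w) :=
        kobayashi_le_poincareDist_lempert (hball (mem_ball_self hρ))
          (hball (mem_ball_iff_norm.mpr hwρ))
    _ ≤ 2 * lempert Ω z w :=
        poincareDist_le_two_mul (lempert_nonneg Ω z w) (hlem.trans hhalf)
    _ ≤ 2 * ‖w - z‖ / ρ := by rw [mul_div_assoc]; gcongr

theorem min_le_poincareDist_lempert_of_forall_far {Ω : Set E} {w z : E} {c R : ℝ}
    (hc : 0 < c) (hc1 : c ≤ 1) (hw : ‖w‖ < R) (hfar : ∀ x ∈ Ω, R ≤ ‖x‖ → c ≤ lempert Ω x w)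
    (hwz : JoinedByDisc Ω w z) :
    min (c / 2) (c / (4 * R) * ‖z - w‖) ≤ poincareDist (lempert Ω w z) :=
  calc min (c / 2) (c / (4 * R) * ‖z - w‖) = min c (c / (2 * R) * ‖z - w‖) / 2 := by
        rw [← min_div_div_right zero_le_two]; ring_nf
    _ ≤ lempert Ω w z / 2 := by gcongr; exact min_le_lempert_of_forall_far hc hc1 hw hfar hwz
    _ ≤ poincareDist (lempert Ω w z) := half_lempert_le_poincareDist Ω w z

/-- Apply `sub_le_kobayashi` to `x ↦ min A (κ ‖x - b‖)`: near `b` a single disc moves it by at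
most its Poincaré length, and away from `b` it already takes its maximal value `A`. -/
theorem exists_min_le_kobayashi {Ω : Set E} (hjoin : ∀ x ∈ Ω, ∀ y ∈ Ω, JoinedByDisc Ω x y)
    {b : E} (hb : b ∈ Ω) {c R ρ : ℝ} (hc : 0 < c) (hρ : 0 < ρ)
    (hfar : ∀ z ∈ Ω, R ≤ ‖z‖ → ∀ w ∈ Ω, dist w b < ρ → c ≤ lempert Ω z w) :
    ∃ A > 0, ∃ κ > 0, ∀ w ∈ Ω, min A (κ * ‖w - b‖) ≤ kobayashi Ω b w := by
  set c' := min c 1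
  set R' := max R (‖b‖ + ρ)
  have hc' : 0 < c' := lt_min hc one_pos
  have hR' : 0 < R' := lt_max_of_lt_right (by positivity)
  set κ := c' / (4 * R')
  set A := min (c' / 2) (κ * ρ)
  have hA : 0 < A := by positivity
  refine ⟨A, hA, κ, by positivity, fun w hw => ?_⟩
  have := sub_le_kobayashi (F := fun x => min A (κ * ‖x - b‖)) ?_ hb hw
  · simpa [min_eq_right hA.le] using this
  intro x hx y hy
  rcases lt_or_ge (dist x b) ρ with hxb | hxb
  · have hxR : ‖x‖ < R' := by
      calc ‖x‖ ≤ ‖b‖ + ‖x - b‖ := norm_le_norm_add_norm_sub' x b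
        _ < ‖b‖ + ρ := by rw [← dist_eq_norm]; linarith
        _ ≤ R' := le_max_right _ _
    have hstep := min_le_poincareDist_lempert_of_forall_far hc' (min_le_right _ _) hxR
      (fun z hz hRz => (min_le_left _ _).trans
        (hfar z hz ((le_max_left _ _).trans hRz) x hx hxb)) (hjoin x hx y hy)
    calc min A (κ * ‖y - b‖) ≤ min A (κ * ‖x - b‖) + min A (κ * ‖y - x‖) := by
          refine min_le_min_add_min hA.le (by positivity) (by positivity) ?_
          rw [← mul_add]
          gcongr
          linarith [norm_sub_le_norm_sub_add_norm_sub y x b]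
      _ ≤ min A (κ * ‖x - b‖) + poincareDist (lempert Ω x y) := by
          gcongr
          exact (min_le_min (min_le_left _ _) le_rfl).trans hstep
  · have hAx : min A (κ * ‖x - b‖) = A :=
      min_eq_left ((min_le_right _ _).trans (by rw [← dist_eq_norm]; gcongr))
    linarith [min_le_left A (κ * ‖y - b‖), poincareDist_lempert_nonneg Ω x y]

theorem isHyperbolic_of_forall_min_le_kobayashi {Ω : Set E} (hΩ : IsOpen Ω)
    (hlower : ∀ z ∈ Ω, ∃ A > 0, ∃ κ > 0, ∀ w ∈ Ω, min A (κ * ‖w - z‖) ≤ kobayashi Ω z w) :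
    IsHyperbolic Ω := by
  refine ⟨fun z hz w hw hzw => ?_, fun z hz ε hε => ?_, fun z hz ε hε => ?_⟩
  · obtain ⟨A, hA, κ, hκ, h⟩ := hlower z hz
    have hmin := h w hw
    rw [hzw, min_le_iff] at hmin
    have hwz : ‖w - z‖ ≤ 0 := hmin.elim (fun h => absurd h hA.not_ge) fun h =>
      nonpos_of_mul_nonpos_right h hκ
    exact (sub_eq_zero.1 (norm_le_zero_iff.1 hwz)).symm
  · obtain ⟨A, hA, κ, hκ, h⟩ := hlower z hz
    refine ⟨min A (κ * ε), by positivity, fun w hw hk => ?_⟩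
    by_contra! hwz
    exact ((min_le_min le_rfl (by gcongr)).trans (h w hw)).not_gt hk
  · obtain ⟨ρ, hρ, hball⟩ := Metric.isOpen_iff.mp hΩ z hz
    refine ⟨min (ρ / 2) (ρ * ε / 4), by positivity, fun w _ hwz => ?_⟩
    calc kobayashi Ω z w ≤ 2 * ‖w - z‖ / ρ :=
          kobayashi_le_of_ball hρ hball (hwz.le.trans (min_le_left _ _))
      _ < ε := by rw [div_lt_iff₀ hρ]; nlinarith [min_le_right (ρ / 2) (ρ * ε / 4), mul_pos hρ hε]

end Kobayashi

section Discs

theorem norm_cos_sub_cos_re_le (ζ : ℂ) :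
    ‖Complex.cos ζ - Real.cos ζ.re‖ ≤ Real.exp |ζ.im| - 1 := by
  set x := ζ.re
  set y := ζ.im
  have hζ : Complex.cos ζ - Real.cos x = ((Real.cos x * (Real.cosh y - 1) : ℝ) : ℂ)
      - ((Real.sin x * Real.sinh y : ℝ) : ℂ) * Complex.I := by
    conv_lhs => rw [← Complex.re_add_im ζ, Complex.cos_add_mul_I]
    push_cast; ring
  rw [hζ]
  refine (norm_sub_le _ _).trans ?_
  rw [norm_mul, Complex.norm_I, mul_one, Complex.norm_real, Complex.norm_real, Real.norm_eq_abs,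
    Real.norm_eq_abs, abs_mul, abs_mul, abs_of_nonneg (sub_nonneg.2 (Real.one_le_cosh y)),
    ← Real.cosh_add_sinh, Real.cosh_abs, ← Real.abs_sinh]
  nlinarith [mul_nonneg (sub_nonneg.2 (Real.abs_cos_le_one x)) (sub_nonneg.2 (Real.one_le_cosh y)),
    mul_nonneg (sub_nonneg.2 (Real.abs_sin_le_one x)) (abs_nonneg (Real.sinh y))]

theorem re_one_add_div_one_sub_pos {s : ℂ} (hs : ‖s‖ < 1) : 0 < ((1 + s) / (1 - s)).re := by
  have hsq : Complex.normSq s < 1 := by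
    rw [Complex.normSq_eq_norm_sq]; nlinarith [norm_nonneg s]
  rw [Complex.normSq_apply] at hsq
  rw [Complex.div_re, ← add_div]
  refine div_pos ?_ (Complex.normSq_pos.2 (one_sub_ne_zero_of_norm_lt_one hs))
  simp only [Complex.add_re, Complex.add_im, Complex.sub_re, Complex.sub_im, Complex.one_re,
    Complex.one_im]
  nlinarith

/-- `s ↦ σ log ((1 + s) / (1 - s))` maps the unit disc onto the strip `|Im| < σπ/2`, and
`(1 - cos) / 2` maps a thin horizontal strip close to `[0, 1]`. -/
theorem exists_disc_map_near_unitInterval {η : ℝ} (hη : 0 < η) :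
    ∃ (φ : ℂ → ℂ) (t : ℂ), DifferentiableOn ℂ φ (ball 0 1) ∧ φ 0 = 0 ∧ φ t = 1 ∧
      t ∈ ball (0 : ℂ) 1 ∧ MapsTo φ (ball 0 1) (thickening η (Complex.ofReal '' Icc 0 1)) := by
  set y₀ := Real.log (1 + η)
  have hy₀ : 0 < y₀ := Real.log_pos (by linarith)
  set σ := 2 * y₀ / Real.pi with hσ_def
  have hσ : 0 < σ := by positivity
  set t := Real.tanh (Real.pi / (2 * σ))
  have ht : t ∈ Ioo (-1) 1 := ⟨Real.neg_one_lt_tanh _, Real.tanh_lt_one _⟩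
  refine ⟨fun s => (1 - Complex.cos (σ * Complex.log ((1 + s) / (1 - s)))) / 2, t,
    fun s hs => ?_, by simp, ?_, ?_, fun s hs => ?_⟩
  · have hs1 := one_sub_ne_zero_of_norm_lt_one (mem_ball_zero_iff.mp hs)
    have hslit : (1 + s) / (1 - s) ∈ Complex.slitPlane :=
      Or.inl (re_one_add_div_one_sub_pos (mem_ball_zero_iff.mp hs))
    exact DifferentiableAt.differentiableWithinAt (by fun_prop (disch := assumption))
  · have hlog : Real.log ((1 + t) / (1 - t)) = Real.pi / σ := by
      rw [← mul_right_inj' (one_div_ne_zero two_ne_zero), ← Real.artanh_eq_half_log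
        (Ioo_subset_Icc_self ht), Real.artanh_tanh]
      field_simp
    have hpos : 0 < (1 + t) / (1 - t) := div_pos (by linarith [ht.1]) (by linarith [ht.2])
    have : Complex.log ((1 + t) / (1 - t)) = (Real.pi / σ : ℝ) := by
      rw [← hlog, Complex.ofReal_log hpos.le]; push_cast; rfl
    show (1 - Complex.cos (σ * Complex.log ((1 + (t : ℂ)) / (1 - t)))) / 2 = 1
    rw [this, ← Complex.ofReal_mul, mul_div_cancel₀ _ hσ.ne', Complex.cos_pi]
    norm_num
  · rw [mem_ball_zero_iff, Complex.norm_real, Real.norm_eq_abs, abs_lt]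
    exact ht
  · set ζ := (σ : ℂ) * Complex.log ((1 + s) / (1 - s))
    have him : |ζ.im| ≤ y₀ := by
      rw [Complex.im_ofReal_mul, Complex.log_im, abs_mul, abs_of_pos hσ]
      calc σ * |((1 + s) / (1 - s)).arg| ≤ σ * (Real.pi / 2) := by
            gcongr
            exact Complex.abs_arg_le_pi_div_two_iff.2
              (re_one_add_div_one_sub_pos (mem_ball_zero_iff.mp hs)).le
        _ = y₀ := by rw [hσ_def]; field_simp
    refine mem_thickening_iff.2 ⟨((1 - Real.cos ζ.re) / 2 : ℝ),
      ⟨_, ⟨by linarith [Real.cos_le_one ζ.re], by linarith [Real.neg_one_le_cos ζ.re]⟩, rfl⟩, ?_⟩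
    rw [dist_eq_norm]
    calc ‖(1 - Complex.cos ζ) / 2 - ((1 - Real.cos ζ.re) / 2 : ℝ)‖
        = ‖Complex.cos ζ - Real.cos ζ.re‖ / 2 := by
          rw [show (1 - Complex.cos ζ) / 2 - (((1 - Real.cos ζ.re) / 2 : ℝ) : ℂ)
            = -(Complex.cos ζ - Real.cos ζ.re) / 2 by push_cast; ring, norm_div, norm_neg]
          norm_num
      _ ≤ (Real.exp y₀ - 1) / 2 := by
          gcongr
          exact (norm_cos_sub_cos_re_le ζ).trans (by gcongr)
      _ < η := by rw [Real.exp_log (by linarith)]; linarith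

variable {E : Type*} [NormedAddCommGroup E] [NormedSpace ℂ E]

theorem JoinedIn.exists_differentiable {Ω : Set E} (hΩ : IsOpen Ω) {z w : E}
    (h : JoinedIn Ω z w) :
    ∃ P : ℂ → E, Differentiable ℂ P ∧ P 0 = z ∧ P 1 = w ∧ ∀ t ∈ Icc (0 : ℝ) 1, P t ∈ Ω := by
  obtain ⟨γ, hγ⟩ := h
  obtain ⟨δ, hδ, hthick⟩ :=
    (isCompact_range γ.continuous).exists_thickening_subset_open hΩ (range_subset_iff.2 hγ)
  obtain ⟨n, hclose, hn⟩ := ((bernsteinApproximation_uniform γ.toContinuousMap).eventually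
    (ball_mem_nhds _ hδ)).and (eventually_ne_atTop 0) |>.exists
  set P : ℂ → E := fun ζ => ∑ k : Fin (n + 1),
    ((n.choose k : ℂ) * ζ ^ (k : ℕ) * (1 - ζ) ^ (n - k)) • γ (bernstein.z k)
  have hP : ∀ x : unitInterval, P x = bernsteinApproximation n γ.toContinuousMap x := by
    intro x
    simp only [P, bernsteinApproximation.apply, bernstein_apply, ← Complex.coe_smul]
    push_cast
    rfl
  refine ⟨P, by fun_prop, ?_, ?_, fun t ht => hthick ?_⟩
  · simpa using hP 0
  · simpa [hn] using hP 1
  · rw [ContinuousMap.dist_lt_iff hδ] at hclose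
    exact mem_thickening_iff.2 ⟨γ ⟨t, ht⟩, mem_range_self _, hP ⟨t, ht⟩ ▸ hclose ⟨t, ht⟩⟩

theorem JoinedIn.joinedByDisc {Ω : Set E} (hΩ : IsOpen Ω) {z w : E} (h : JoinedIn Ω z w) :
    JoinedByDisc Ω z w := by
  obtain ⟨P, hPd, hP0, hP1, hPΩ⟩ := h.exists_differentiable hΩ
  obtain ⟨η, hη, hηΩ⟩ :=
    (isCompact_Icc.image Complex.continuous_ofReal).exists_thickening_subset_open
      (hΩ.preimage hPd.continuous) (by rintro _ ⟨t, ht, rfl⟩; exact hPΩ t ht)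
  obtain ⟨φ, t, hφd, hφ0, hφt, ht, hφ⟩ := exists_disc_map_near_unitInterval hη
  exact ⟨P ∘ φ, t, hPd.comp_differentiableOn hφd, fun s hs => hηΩ (hφ hs),
    by simp [hφ0, hP0], by simp [hφt, hP1], ht⟩

end Discs

theorem hyperbolic_of_lempert_liminf_pos_general {E : Type*} [NormedAddCommGroup E]
    [NormedSpace ℂ E] (Ω : Set E) (hΩo : IsOpen Ω) (hΩc : IsConnected Ω)
    (hliminf : ∀ b ∈ Ω, ∃ c > (0:ℝ), ∀ᶠ p : E × E in
      (atInfFilter E ⊓ Filter.principal Ω) ×ˢ (nhdsWithin b Ω),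
        c ≤ lempert Ω p.1 p.2) :
    IsHyperbolic Ω := by
  have hjoin : ∀ x ∈ Ω, ∀ y ∈ Ω, JoinedByDisc Ω x y := fun x hx y hy =>
    ((hΩo.isConnected_iff_isPathConnected.mp hΩc).joinedIn x hx y hy).joinedByDisc hΩo
  refine isHyperbolic_of_forall_min_le_kobayashi hΩo fun b hb => ?_
  obtain ⟨c, hc, hev⟩ := hliminf b hb
  obtain ⟨R, ρ, hρ, hfar⟩ :=
    exists_forall_of_eventually_atInf_prod_nhdsWithin (P := fun z w => c ≤ lempert Ω z w) hev
  exact exists_min_le_kobayashi hjoin hb hc hρ hfar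

/-- Theorem 3.1, (b) ⇒ (a): if the Lempert function stays away from `0` as `z → ∞`,
`w → b` for every `b ∈ Ω`, then the unbounded domain `Ω` is hyperbolic. -/
theorem hyperbolic_of_lempert_liminf_pos {E : Type*} [NormedAddCommGroup E]
    [NormedSpace ℂ E] [CompleteSpace E] (Ω : Set E) (hΩo : IsOpen Ω) (hΩc : IsConnected Ω)
    (hub : ¬ Bornology.IsBounded Ω)
    (hliminf : ∀ b ∈ Ω, ∃ c > (0:ℝ), ∀ᶠ p : E × E in
      (atInfFilter E ⊓ Filter.principal Ω) ×ˢ (nhdsWithin b Ω),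
        c ≤ lempert Ω p.1 p.2) :
    IsHyperbolic Ω :=
  hyperbolic_of_lempert_liminf_pos_general Ω hΩo hΩc hliminf
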